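/- (Small Neighborhood Lemma) Let G be a finite simple connected graph, let u and v be vertices of G, and let a and b be non-negative integers such that N_a[u] ∩ N_b[v] = ∅. Define the configuration C* by C*(v) = 2^{a+b+1} − 1, C*(x) = 0 for all x ∈ (N_a[u] ∪ N_b[v]) \ {v}, and C*(x) = 1 for all other vertices x. Then C* is u-unsolvable; consequently π(G) ≥ π(G,u) > |C*|. -/

import Mathlib

/-!
Give a pebble on `x` the weight `2 ^ ℓ(x)`, where `ℓ = a + b + 1 - d(u, ·)` on `N_a[u]`,
`ℓ = d(v, ·)` on `N_b[v]` and `ℓ = b + 1` elsewhere, except that the first pebble on a vertex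
outside both balls weighs nothing. Along an edge `ℓ` grows by at most one (by disjointness of the
balls), and not at all out of a vertex outside the balls, so no pebbling move increases the total
weight. `C*` has total weight `2 ^ (a + b + 1) - 1`, while one pebble on `u` weighs
`2 ^ (a + b + 1)`.

On a connected graph, a configuration with more than `∑ₓ (2 ^ d(x, u) - 1)` pebbles has
`2 ^ d(x, u)` pebbles on some `x`, so it is `u`-solvable; hence `π(G, u)` is attained, and as
adding pebbles preserves solvability, `|C*| < π(G, u)`.
-/

namespace Pebbling

variable {V : Type*}

/-- A single pebbling move on configurations: remove two pebbles from `u`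
(which must have at least two) and add one pebble to an adjacent vertex `w`. -/
def Move (G : SimpleGraph V) (C C' : V → ℕ) : Prop := by
  classical
  exact ∃ u w, G.Adj u w ∧ 2 ≤ C u ∧
    C' = Function.update (Function.update C u (C u - 2)) w (C w + 1)

/-- A configuration `C` is `r`-solvable if some finite sequence of pebbling moves
starting from `C` produces a configuration with at least one pebble on `r`. -/
def Solvable (G : SimpleGraph V) (C : V → ℕ) (r : V) : Prop :=
  ∃ C', Relation.ReflTransGen (Move G) C C' ∧ 1 ≤ C' r

/-- The pebbling number `π(G, r)`: the least `t` such that every configuration of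
size `t` is `r`-solvable. -/
noncomputable def pebblingNumberTo [Fintype V] (G : SimpleGraph V) (r : V) : ℕ :=
  sInf {t | ∀ C : V → ℕ, ∑ x, C x = t → Solvable G C r}

/-- The pebbling number `π(G)`: the maximum of `π(G, r)` over all vertices `r`. -/
noncomputable def pebblingNumber [Fintype V] (G : SimpleGraph V) : ℕ :=
  Finset.univ.sup fun r => pebblingNumberTo G r

/-- A proper `n`-edge-coloring: a coloring of the edges with `n` colors such that
distinct edges sharing an endpoint receive different colors. -/
def HasProperEdgeColoring (G : SimpleGraph V) (n : ℕ) : Prop :=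
  ∃ c : Sym2 V → Fin n, ∀ e₁ ∈ G.edgeSet, ∀ e₂ ∈ G.edgeSet,
    e₁ ≠ e₂ → (∃ x, x ∈ e₁ ∧ x ∈ e₂) → c e₁ ≠ c e₂

/-- A snark: a connected bridgeless cubic simple graph admitting no proper
3-edge-coloring. -/
def IsSnark [Fintype V] (G : SimpleGraph V) [DecidableRel G.Adj] : Prop :=
  G.Connected ∧ (∀ v, G.degree v = 3) ∧ (∀ e, ¬ G.IsBridge e) ∧
    ¬ HasProperEdgeColoring G 3

section Moves

open Function Relation

variable {G : SimpleGraph V} {C C' D : V → ℕ} {r x y : V}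

theorem Move.exists_le_of_le (h : Move G C C') (hCD : C ≤ D) :
    ∃ D', Move G D D' ∧ C' ≤ D' := by
  classical
  obtain ⟨x, y, hxy, hx, rfl⟩ := h
  refine ⟨_, ⟨x, y, hxy, hx.trans (hCD x), rfl⟩, fun z => ?_⟩
  have hx' : C x ≤ D x := hCD x
  have hy' : C y ≤ D y := hCD y
  have hz' : C z ≤ D z := hCD z
  simp only [update_apply]
  split_ifs <;> subst_vars <;> omega

theorem exists_reflTransGen_move_of_le (h : ReflTransGen (Move G) C C') (hCD : C ≤ D) :
    ∃ D', ReflTransGen (Move G) D D' ∧ C' ≤ D' := by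
  induction h with
  | refl => exact ⟨D, .refl, hCD⟩
  | tail _ hmove ih =>
    obtain ⟨D₁, hD₁, hle₁⟩ := ih
    obtain ⟨D₂, hD₂, hle₂⟩ := hmove.exists_le_of_le hle₁
    exact ⟨D₂, hD₁.tail hD₂, hle₂⟩

theorem Solvable.mono (h : Solvable G C r) (hCD : C ≤ D) : Solvable G D r := by
  obtain ⟨C', hC', hr⟩ := h
  obtain ⟨D', hD', hle⟩ := exists_reflTransGen_move_of_le hC' hCD
  exact ⟨D', hD', hr.trans (hle r)⟩

theorem Solvable.of_reflTransGen (h : ReflTransGen (Move G) C D) (hD : Solvable G D r) :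
    Solvable G C r :=
  let ⟨D', hD', hr⟩ := hD
  ⟨D', h.trans hD', hr⟩

theorem reflTransGen_move_of_adj [DecidableEq V] (hxy : G.Adj x y) {m : ℕ} (hm : 2 * m ≤ C x) :
    ReflTransGen (Move G) C (update (update C x (C x - 2 * m)) y (C y + m)) := by
  induction m with
  | zero => simpa using ReflTransGen.refl
  | succ m ih =>
    refine (ih (by omega)).tail ⟨x, y, hxy, by simp [hxy.ne]; omega, ?_⟩
    funext z
    simp only [update_apply]
    split_ifs <;> grind

theorem solvable_of_walk (p : G.Walk x r) (hC : 2 ^ p.length ≤ C x) : Solvable G C r := by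
  classical
  induction p generalizing C with
  | nil => exact ⟨C, .refl, le_trans Nat.one_le_two_pow hC⟩
  | @cons x y r hxy p ih =>
    rw [SimpleGraph.Walk.length_cons, pow_succ'] at hC
    exact .of_reflTransGen (reflTransGen_move_of_adj hxy hC) (ih (by simp))

theorem _root_.SimpleGraph.Reachable.solvable (h : G.Reachable x r) (hC : 2 ^ G.dist x r ≤ C x) :
    Solvable G C r :=
  let ⟨p, hp⟩ := h.exists_walk_length_eq_dist
  solvable_of_walk p (hp ▸ hC)

theorem _root_.SimpleGraph.Connected.solvable_of_sum_lt [Fintype V] (hconn : G.Connected)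
    (h : ∑ x, (2 ^ G.dist x r - 1) < ∑ x, C x) : Solvable G C r := by
  -- pigeonhole: some vertex `x` carries `2 ^ d(x, r)` pebbles
  obtain ⟨x, -, hx⟩ := Finset.exists_lt_of_sum_lt h
  exact (hconn x r).solvable (by omega)

end Moves

section PebblingNumber

variable [Fintype V] {G : SimpleGraph V} {r : V}

theorem solvable_of_sum_eq_succ {t : ℕ} (ht : ∀ C : V → ℕ, ∑ x, C x = t → Solvable G C r)
    {C : V → ℕ} (hC : ∑ x, C x = t + 1) : Solvable G C r := by
  classical
  obtain ⟨x, hx⟩ : ∃ x, C x ≠ 0 := by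
    by_contra! h
    simp [h] at hC
  refine (ht (Function.update C x (C x - 1)) ?_).mono (update_le_self_iff.2 (Nat.sub_le _ _))
  rw [Finset.sum_update_of_mem (Finset.mem_univ x)]
  rw [Finset.sum_eq_add_sum_sdiff_singleton x C (by simp)] at hC
  omega

theorem solvable_of_pebblingNumberTo_le (hconn : G.Connected) {C : V → ℕ}
    (hC : pebblingNumberTo G r ≤ ∑ x, C x) : Solvable G C r := by
  have hne : {t | ∀ C : V → ℕ, ∑ x, C x = t → Solvable G C r}.Nonempty :=
    ⟨∑ x, (2 ^ G.dist x r - 1) + 1, fun C hC => hconn.solvable_of_sum_lt (by omega)⟩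
  suffices ∀ t, pebblingNumberTo G r ≤ t → ∀ C : V → ℕ, ∑ x, C x = t → Solvable G C r from
    this _ hC C rfl
  intro t ht
  induction t, ht using Nat.le_induction with
  | base => exact Nat.sInf_mem hne
  | succ t _ ih => exact fun C hC => solvable_of_sum_eq_succ ih hC

theorem sum_lt_pebblingNumberTo (hconn : G.Connected) {C : V → ℕ} (hC : ¬ Solvable G C r) :
    ∑ x, C x < pebblingNumberTo G r :=
  lt_of_not_ge fun hle => hC (solvable_of_pebblingNumberTo_le hconn hle)

theorem pebblingNumberTo_le_pebblingNumber (G : SimpleGraph V) (r : V) :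
    pebblingNumberTo G r ≤ pebblingNumber G :=
  Finset.le_sup (f := fun r => pebblingNumberTo G r) (Finset.mem_univ r)

end PebblingNumber

def pebbleCost (first rest k : ℕ) : ℕ :=
  if k = 0 then 0 else first + (k - 1) * rest

section PebbleCost

variable {first rest k : ℕ}

theorem le_pebbleCost (hk : k ≠ 0) : first ≤ pebbleCost first rest k := by
  simp [pebbleCost, hk]

theorem pebbleCost_succ_le (h : first ≤ rest) (k : ℕ) :
    pebbleCost first rest (k + 1) ≤ pebbleCost first rest k + rest := by
  cases k with
  | zero => simpa [pebbleCost] using h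
  | succ k => simp [pebbleCost, add_mul]; omega

theorem pebbleCost_sub_two_add_le (h : first ≤ rest) (hk : 2 ≤ k) :
    pebbleCost first rest (k - 2) + (rest + first) ≤ pebbleCost first rest k := by
  obtain ⟨_ | m, rfl⟩ := Nat.exists_eq_add_of_le' hk
  · simp [pebbleCost]; omega
  · simp [pebbleCost, add_mul]; omega

end PebbleCost

structure IsWeighting (G : SimpleGraph V) (first rest : V → ℕ) : Prop where
  first_le_rest (x : V) : first x ≤ rest x
  rest_le_of_adj ⦃x y : V⦄ : G.Adj x y → rest y ≤ rest x + first x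

def potential [Fintype V] (first rest C : V → ℕ) : ℕ :=
  ∑ x, pebbleCost (first x) (rest x) (C x)

namespace IsWeighting

open Function Relation

variable [Fintype V] {G : SimpleGraph V} {first rest C C' : V → ℕ} {r : V}

theorem potential_le_of_move (hw : IsWeighting G first rest) (h : Move G C C') :
    potential first rest C' ≤ potential first rest C := by
  classical
  obtain ⟨x, y, hxy, hx, rfl⟩ := h
  -- the move takes at least `rest x + first x` off `x` and adds at most `rest y` to `y`
  have hpoint : ∀ z, pebbleCost (first z) (rest z) (update (update C x (C x - 2)) y (C y + 1) z)
      + (Pi.single x (rest x + first x) : V → ℕ) z ≤ pebbleCost (first z) (rest z) (C z)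
      + (Pi.single y (rest y) : V → ℕ) z := by
    intro z
    rcases eq_or_ne z y with rfl | hzy
    · simpa [hxy.ne'] using pebbleCost_succ_le (hw.first_le_rest z) (C z)
    rcases eq_or_ne z x with rfl | hzx
    · simpa [hzy] using pebbleCost_sub_two_add_le (hw.first_le_rest z) hx
    · simp [hzy, hzx]
  have hsum := Finset.sum_le_sum fun z (_ : z ∈ Finset.univ) => hpoint z
  simp only [Finset.sum_add_distrib, Finset.sum_pi_single', Finset.mem_univ, if_true] at hsum
  have := hw.rest_le_of_adj hxy
  unfold potential
  omega

theorem potential_le_of_reflTransGen (hw : IsWeighting G first rest)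
    (h : ReflTransGen (Move G) C C') : potential first rest C' ≤ potential first rest C := by
  induction h with
  | refl => exact le_rfl
  | tail _ hmove ih => exact (hw.potential_le_of_move hmove).trans ih

theorem le_potential_of_solvable (hw : IsWeighting G first rest) (h : Solvable G C r) :
    first r ≤ potential first rest C := by
  obtain ⟨C', hC', hr⟩ := h
  calc first r ≤ pebbleCost (first r) (rest r) (C' r) := le_pebbleCost (by omega)
    _ ≤ potential first rest C' :=
      Finset.single_le_sum (f := fun x => pebbleCost (first x) (rest x) (C' x))
        (fun _ _ => Nat.zero_le _) (Finset.mem_univ r)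
    _ ≤ potential first rest C := hw.potential_le_of_reflTransGen hC'

end IsWeighting

theorem _root_.SimpleGraph.Adj.dist_le_dist_add_one {G : SimpleGraph V} {x y : V} (hxy : G.Adj x y)
    (w : V) : G.dist w y ≤ G.dist w x + 1 := by
  rcases hxy.diff_dist_adj (u := w) with h | h | h <;> omega

section SmallNeighborhood

variable (G : SimpleGraph V) (u v : V) (a b : ℕ)

noncomputable def ballLevel (x : V) : ℕ :=
  if G.dist u x ≤ a then a + b + 1 - G.dist u x
  else if G.dist v x ≤ b then G.dist v x
  else b + 1

noncomputable def ballWeight (x : V) : ℕ := 2 ^ ballLevel G u v a b x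

noncomputable def ballFirstWeight (x : V) : ℕ :=
  if G.dist u x ≤ a ∨ G.dist v x ≤ b then ballWeight G u v a b x else 0

open scoped Classical in
noncomputable def smallNeighborhoodConfig (x : V) : ℕ :=
  if x = v then 2 ^ (a + b + 1) - 1
  else if G.dist u x ≤ a ∨ G.dist v x ≤ b then 0
  else 1

variable {G u v a b} {x y : V}

theorem ballLevel_le_of_adj (hdisj : ∀ x, G.dist u x ≤ a → b < G.dist v x) (hxy : G.Adj x y) :
    ballLevel G u v a b y ≤ ballLevel G u v a b x + 1 := by
  have := hxy.dist_le_dist_add_one u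
  have := hxy.symm.dist_le_dist_add_one u
  have := hxy.dist_le_dist_add_one v
  have := hdisj x
  have := hdisj y
  unfold ballLevel
  split_ifs <;> omega

theorem ballLevel_le_of_adj_of_not_mem (hxy : G.Adj x y)
    (hx : ¬ (G.dist u x ≤ a ∨ G.dist v x ≤ b)) :
    ballLevel G u v a b y ≤ ballLevel G u v a b x := by
  have := hxy.symm.dist_le_dist_add_one u
  unfold ballLevel
  split_ifs <;> omega

theorem isWeighting_ballWeight (hdisj : ∀ x, G.dist u x ≤ a → b < G.dist v x) :
    IsWeighting G (ballFirstWeight G u v a b) (ballWeight G u v a b) where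
  first_le_rest x := by
    unfold ballFirstWeight
    split_ifs <;> simp
  rest_le_of_adj x y hxy := by
    unfold ballFirstWeight ballWeight
    split_ifs with hx
    · rw [← mul_two, ← pow_succ]
      exact Nat.pow_le_pow_right two_pos (ballLevel_le_of_adj hdisj hxy)
    · simpa using Nat.pow_le_pow_right two_pos (ballLevel_le_of_adj_of_not_mem hxy hx)

theorem potential_smallNeighborhoodConfig [Fintype V]
    (hdisj : ∀ x, G.dist u x ≤ a → b < G.dist v x) :
    potential (ballFirstWeight G u v a b) (ballWeight G u v a b) (smallNeighborhoodConfig G u v a b)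
      = 2 ^ (a + b + 1) - 1 := by
  have huv : ¬ G.dist u v ≤ a := fun h => by simpa using hdisj v h
  rw [potential, Finset.sum_eq_single v]
  · have : 2 ≤ 2 ^ (a + b + 1) := Nat.le_self_pow (by omega) 2
    simp [smallNeighborhoodConfig, ballFirstWeight, ballWeight, ballLevel, pebbleCost, huv]
    split_ifs <;> omega
  · intro x _ hxv
    simp only [smallNeighborhoodConfig, ballFirstWeight, pebbleCost, hxv]
    split_ifs <;> simp_all
  · simp

theorem not_solvable_smallNeighborhoodConfig [Fintype V]
    (hdisj : ∀ x, G.dist u x ≤ a → b < G.dist v x) :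
    ¬ Solvable G (smallNeighborhoodConfig G u v a b) u := fun h => by
  have := (isWeighting_ballWeight hdisj).le_potential_of_solvable h
  rw [potential_smallNeighborhoodConfig hdisj] at this
  simp only [ballFirstWeight, ballWeight, ballLevel, SimpleGraph.dist_self, zero_le, true_or,
    if_true, Nat.sub_zero] at this
  have := Nat.one_le_two_pow (n := a + b + 1)
  omega

end SmallNeighborhood

open scoped Classical in
/-- Small Neighborhood Lemma: if the balls N_a[u] and N_b[v] are
disjoint, then the configuration C* (with 2^(a+b+1) − 1 pebbles on v, no pebbles
elsewhere on N_a[u] ∪ N_b[v], and one pebble on every other vertex) is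
u-unsolvable; consequently π(G) ≥ π(G,u) > |C*|. -/
theorem small_neighborhood_lemma
    {V : Type*} [Fintype V] (G : SimpleGraph V)
    (hconn : G.Connected) (u v : V) (a b : ℕ)
    (hdisj : {x | G.dist u x ≤ a} ∩ {x | G.dist v x ≤ b} = ∅) :
    letI Cstar : V → ℕ := fun x =>
      if x = v then 2 ^ (a + b + 1) - 1
      else if G.dist u x ≤ a ∨ G.dist v x ≤ b then 0
      else 1
    ¬ Solvable G Cstar u ∧
      (∑ x, Cstar x) < pebblingNumberTo G u ∧
      pebblingNumberTo G u ≤ pebblingNumber G := by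
  have hdisj' : ∀ x, G.dist u x ≤ a → b < G.dist v x := fun x hu =>
    lt_of_not_ge fun hv => Set.eq_empty_iff_forall_notMem.1 hdisj x ⟨hu, hv⟩
  have hunsolvable := not_solvable_smallNeighborhoodConfig hdisj'
  exact ⟨hunsolvable, sum_lt_pebblingNumberTo hconn hunsolvable,
    pebblingNumberTo_le_pebblingNumber G u⟩

end Pebbling
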